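/- arXiv:1711.08024 — 7 statements merged into one kernel-verified Lean document; each statement's English description precedes it below -/
import Mathlib

section
/- Let n ≥ 1, write I = [0,1], and let I' ⊆ I be a closed subinterval with nonempty interior. Let Q be a compact Hausdorff topological space and let f : I × Q → ℂⁿ be a continuous map such that for every q ∈ Q the path f(·,q) : I' → ℂⁿ is full. Then there exist N ∈ ℕ and continuous functions g₁, …, g_N : I → ℂ, each vanishing outside I', such that for every q ∈ Q the N vectors ∫₀¹ gᵢ(s) f(s,q) ds (i = 1,…,N) span ℂⁿ; equivalently, the ℂ-linear map ℂᴺ → ℂⁿ, (t₁,…,t_N) ↦ ∑ᵢ tᵢ ∫₀¹ gᵢ(s) f(s,q) ds — the derivative at t = 0 of t ↦ ∫₀¹ (1 + ∑ᵢ tᵢ gᵢ(s)) f(s,q) ds — is surjective for every q ∈ Q. (The function h(s,t) = 1 + ∑ᵢ tᵢ gᵢ(s) is called a period dominating multiplier of f.) -/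
/-! Fix a continuous `φ ≥ 0` whose support is exactly `(a, b)` and use the multipliers `φ h`,
`h ∈ C(ℝ, ℂ)`. At a fixed `q`, a vector `ξ` orthogonal to every `∫ φ h f(·, q)` is, for
`h = conj ⟪ξ, f(·, q)⟫`, orthogonal to `∫ φ |⟪ξ, f(·, q)⟫|²`; hence `ξ ⊥ f(s, q)` for all
`s ∈ [a, b]`, and fullness gives `ξ = 0`. So these vectors span `ℂⁿ` at each `q`. Linear
independence of `n` of them at `q` persists near `q`, and compactness of `Q` leaves finitely many
multipliers. -/
open MeasureTheory Set Submodule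

theorem exists_linearIndependent_comp_of_span_range_eq_top {K V ι : Type*} [DivisionRing K]
    [AddCommGroup V] [Module K V] [FiniteDimensional K V] {v : ι → V}
    (hv : span K (range v) = ⊤) :
    ∃ τ : Fin (Module.finrank K V) → ι, LinearIndependent K (v ∘ τ) := by
  obtain ⟨κ, a, -, hspan, hli⟩ := exists_linearIndependent' K v
  have : Fintype κ := have := hli.finite; Fintype.ofFinite κ
  let B := Module.Basis.mk hli (hspan.trans hv).ge
  let e := (Fintype.equivFinOfCardEq (Module.finrank_eq_card_basis B).symm).symm
  exact ⟨a ∘ e, hli.comp e e.injective⟩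

theorem CompactSpace.exists_fin_span_range_eq_top {𝕜 E X G : Type*} [NontriviallyNormedField 𝕜]
    [CompleteSpace 𝕜] [NormedAddCommGroup E] [NormedSpace 𝕜 E] [FiniteDimensional 𝕜 E]
    [TopologicalSpace X] [CompactSpace X] {v : G → X → E} (hv : ∀ g, Continuous (v g))
    (hspan : ∀ x, span 𝕜 (range fun g => v g x) = ⊤) :
    ∃ (N : ℕ) (τ : Fin N → G), ∀ x, span 𝕜 (range fun i => v (τ i) x) = ⊤ := by
  choose τ hτ using fun x => exists_linearIndependent_comp_of_span_range_eq_top (hspan x)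
  let U x := {y | LinearIndependent 𝕜 fun i => v (τ x i) y}
  have hU : ∀ x, IsOpen (U x) := fun x =>
    isOpen_setOfPred_linearIndependent.preimage (continuous_pi fun i => hv _)
  obtain ⟨t, ht⟩ := isCompact_univ.elim_finite_subcover U hU fun x _ => mem_iUnion.2 ⟨x, hτ x⟩
  let e := Fintype.equivFin (t × Fin (Module.finrank 𝕜 E))
  refine ⟨_, fun j => τ (e.symm j).1 (e.symm j).2, fun y => ?_⟩
  obtain ⟨x, hxt, hy⟩ := mem_iUnion₂.1 (ht (mem_univ y))
  refine eq_top_iff.2 ((hy.span_eq_top_of_card_eq_finrank' (by simp)).ge.trans (span_mono ?_))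
  rintro _ ⟨i, rfl⟩
  exact ⟨e ⟨⟨x, hxt⟩, i⟩, by simp⟩

theorem exists_continuous_nonneg_pos_on_Ioo_zero_off_Icc (a b : ℝ) :
    ∃ φ : ℝ → ℝ, Continuous φ ∧ 0 ≤ φ ∧ (∀ s ∈ Ioo a b, 0 < φ s) ∧ ∀ s ∉ Icc a b, φ s = 0 := by
  obtain ⟨φ, hsupp, hsmooth, hrange⟩ :=
    (isOpen_Ioo (a := a) (b := b)).exists_contDiff_support_eq (n := 0)
  have hφ0 : 0 ≤ φ := fun s => (hrange (mem_range_self s)).1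
  refine ⟨φ, hsmooth.continuous, hφ0, fun s hs => ?_, fun s hs => ?_⟩
  · exact (hφ0 s).lt_of_ne' (Function.mem_support.1 (hsupp ▸ hs))
  · exact Function.notMem_support.1 fun h => hs (Ioo_subset_Icc_self (hsupp ▸ h))

theorem eqOn_zero_of_intervalIntegral_eq_zero {w : ℝ → ℝ} {c d : ℝ} (hcd : c ≤ d)
    (hw : Continuous w) (hw0 : 0 ≤ w) (h : ∫ s in c..d, w s = 0) : EqOn w 0 (Ioc c d) := by
  rw [intervalIntegral.integral_eq_zero_iff_of_le_of_nonneg_ae hcd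
    (Filter.Eventually.of_forall hw0) (hw.intervalIntegrable c d)] at h
  exact Measure.eqOn_Ioc_of_ae_eq volume h hw.continuousOn continuousOn_const

section InnerProductSpace

variable {𝕜 E : Type*} [RCLike 𝕜] [NormedAddCommGroup E] [InnerProductSpace 𝕜 E]
  [NormedSpace ℝ E] [FiniteDimensional 𝕜 E]

open scoped InnerProductSpace ComplexConjugate

theorem span_range_intervalIntegral_mul_smul_eq_top {φ : ℝ → ℝ} {F : ℝ → E} {a b c d : ℝ}
    (hφ : Continuous φ) (hφ0 : 0 ≤ φ) (hφpos : ∀ s ∈ Ioo a b, 0 < φ s) (hF : Continuous F)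
    (hab : a < b) (hca : c ≤ a) (hbd : b ≤ d) (hfull : span 𝕜 (F '' Icc a b) = ⊤) :
    span 𝕜 (range fun h : C(ℝ, 𝕜) => ∫ s in c..d, ((φ s : 𝕜) * h s) • F s) = ⊤ := by
  have := FiniteDimensional.complete 𝕜 E
  by_contra hne
  obtain ⟨ξ, hξ, hξ0⟩ := (Submodule.ne_bot_iff _).1 (mt Submodule.orthogonal_eq_bot_iff.1 hne)
  set u : ℝ → 𝕜 := fun s => ⟪ξ, F s⟫_𝕜
  have hu : Continuous u := continuous_const.inner hF
  have hint : ∫ s in c..d, φ s * ‖u s‖ ^ 2 = 0 := by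
    have hg : Continuous fun s => conj (u s) := RCLike.continuous_conj.comp hu
    have h := inner_eq_zero_symm.1 (hξ _ (subset_span ⟨⟨_, hg⟩, rfl⟩))
    have hpair : ⟪ξ, ∫ s in c..d, ((φ s : 𝕜) * conj (u s)) • F s⟫_𝕜
        = ((∫ s in c..d, φ s * ‖u s‖ ^ 2 : ℝ) : 𝕜) := calc
      _ = ∫ s in c..d, ⟪ξ, ((φ s : 𝕜) * conj (u s)) • F s⟫_𝕜 :=
        ((innerSL 𝕜 ξ).intervalIntegral_comp_comm
          (Continuous.intervalIntegrable (by fun_prop) _ _)).symm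
      _ = ∫ s in c..d, ((φ s * ‖u s‖ ^ 2 : ℝ) : 𝕜) := by
        refine intervalIntegral.integral_congr fun s _ => ?_
        rw [inner_smul_right, mul_assoc, RCLike.conj_mul]
        push_cast
        rfl
      _ = _ := RCLike.intervalIntegral_ofReal
    exact_mod_cast hpair.symm.trans h
  have hu0 : EqOn u 0 (Icc a b) := by
    have hIoo : EqOn u 0 (Ioo a b) := fun s hs => by
      have h := eqOn_zero_of_intervalIntegral_eq_zero (hca.trans (hab.trans_le hbd).le)
        (hφ.mul (hu.norm.pow 2)) (fun s => mul_nonneg (hφ0 s) (sq_nonneg _)) hint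
        ⟨hca.trans_lt hs.1, hs.2.le.trans hbd⟩
      simpa [(hφpos s hs).ne'] using h
    simpa [closure_Ioo hab.ne] using hIoo.closure hu continuous_const
  have hker : span 𝕜 (F '' Icc a b) ≤ LinearMap.ker (innerₛₗ 𝕜 ξ) :=
    span_le.2 (image_subset_iff.2 fun s hs => hu0 hs)
  rw [hfull] at hker
  exact hξ0 (inner_self_eq_zero.1 (hker (mem_top (x := ξ))))

end InnerProductSpace

theorem period_dominating_multiplier_general
    (n : ℕ) (a b : ℝ) (ha : 0 ≤ a) (hab : a < b) (hb : b ≤ 1)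
    (Q : Type*) [TopologicalSpace Q] [CompactSpace Q]
    (f : ℝ × Q → EuclideanSpace ℂ (Fin n))
    (hf : ContinuousOn f ((Set.Icc (0:ℝ) 1) ×ˢ (Set.univ : Set Q)))
    (hfull : ∀ q : Q,
      Submodule.span ℂ ((fun s => f (s, q)) '' Set.Icc a b) = ⊤) :
    ∃ (N : ℕ) (g : Fin N → ℝ → ℂ),
      (∀ i, Continuous (g i)) ∧
      (∀ i, ∀ s : ℝ, s ∉ Set.Icc a b → g i s = 0) ∧
      (∀ q : Q, Submodule.span ℂ
        (Set.range (fun i : Fin N => ∫ s in (0:ℝ)..1, g i s • f (s, q))) = ⊤) := by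
  obtain ⟨φ, hφ, hφ0, hφpos, hφout⟩ := exists_continuous_nonneg_pos_on_Ioo_zero_off_Icc a b
  set F : ℝ × Q → EuclideanSpace ℂ (Fin n) := fun p => f (projIcc 0 1 zero_le_one p.1, p.2)
  have hF : Continuous F :=
    hf.comp_continuous (by fun_prop) fun p => ⟨Subtype.mem _, trivial⟩
  have hFf : ∀ s ∈ Icc (0:ℝ) 1, ∀ q, F (s, q) = f (s, q) := fun s hs q => by
    simp [F, projIcc_of_mem _ hs]
  obtain ⟨N, τ, hτ⟩ := CompactSpace.exists_fin_span_range_eq_top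
    (v := fun (h : C(ℝ, ℂ)) q => ∫ s in (0:ℝ)..1, ((φ s : ℂ) * h s) • F (s, q))
    (fun h =>
      intervalIntegral.continuous_parametric_intervalIntegral_of_continuous' (by fun_prop) 0 1)
    (fun q => span_range_intervalIntegral_mul_smul_eq_top hφ hφ0 hφpos (by fun_prop) hab ha hb
      (by
        rw [image_congr fun s (hs : s ∈ Icc a b) => hFf s ⟨ha.trans hs.1, hs.2.trans hb⟩ q]
        exact hfull q))
  refine ⟨N, fun i s => φ s * τ i s, fun i => by fun_prop, fun i s hs => by simp [hφout s hs],
    fun q => ?_⟩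
  refine .trans (congrArg (fun v => span ℂ (range v)) (funext fun i => ?_)) (hτ q)
  refine intervalIntegral.integral_congr fun s hs => ?_
  rw [uIcc_of_le zero_le_one] at hs
  simp [hFf s hs]

/-- **Period dominating multipliers** (Lemma 2.1 in Alarcón–Forstnerič–López, JGEA 2017).
Let `I = [0,1]` and let `I' = [a,b] ⊆ I` be a closed subinterval with nonempty interior.
Let `Q` be a compact Hausdorff space and `f : I × Q → ℂⁿ` continuous such that `f(·,q)` is
full on `I'` for each `q ∈ Q`. Then there are finitely many continuous functions
`g₁, …, g_N : I → ℂ` supported on `I'` such that for every `q` the vectors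
`∫₀¹ gᵢ(s) f(s,q) ds` span `ℂⁿ`. -/
theorem period_dominating_multiplier
    (n : ℕ) (hn : 1 ≤ n) (a b : ℝ) (ha : 0 ≤ a) (hab : a < b) (hb : b ≤ 1)
    (Q : Type*) [TopologicalSpace Q] [CompactSpace Q] [T2Space Q]
    (f : ℝ × Q → EuclideanSpace ℂ (Fin n))
    (hf : ContinuousOn f ((Set.Icc (0:ℝ) 1) ×ˢ (Set.univ : Set Q)))
    (hfull : ∀ q : Q,
      Submodule.span ℂ ((fun s => f (s, q)) '' Set.Icc a b) = ⊤) :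
    ∃ (N : ℕ) (g : Fin N → ℝ → ℂ),
      (∀ i, Continuous (g i)) ∧
      (∀ i, ∀ s : ℝ, s ∉ Set.Icc a b → g i s = 0) ∧
      (∀ q : Q, Submodule.span ℂ
        (Set.range (fun i : Fin N => ∫ s in (0:ℝ)..1, g i s • f (s, q))) = ⊤) :=
  period_dominating_multiplier_general n a b ha hab hb Q f hf hfull
end

section
/- Let n ≥ 1, write I = [0,1], and let I' ⊆ I be a closed subinterval with nonempty interior. Let Q be a compact Hausdorff topological space and let f : I × Q → ℂⁿ be a continuous map such that for every q ∈ Q the path f(·,q) : I' → ℂⁿ is full. Then there exist N ∈ ℕ and points s₁, …, s_N in the interior of I' such that for every q ∈ Q the vectors f(s₁,q), …, f(s_N,q) span ℂⁿ. -/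
/-!
Since `ℂⁿ` is finite-dimensional, its subspaces are closed, so by continuity the points of the
open interval `(a, b)` already span. For each `q` pick a basis `f(s₁,q), …, f(sₙ,q)` with the
`sᵢ` in `(a, b)`; linear independence is an open condition, so the same `sᵢ` work for all `q'`
near `q`, and compactness of `Q` leaves finitely many such tuples.
-/

open Set Submodule

theorem exists_fin_finrank_linearIndependent_of_span_eq_top {K V : Type*} [DivisionRing K]
    [AddCommGroup V] [Module K V] [FiniteDimensional K V] {s : Set V} (hs : span K s = ⊤) :
    ∃ v : Fin (Module.finrank K V) → V, (∀ i, v i ∈ s) ∧ LinearIndependent K v := by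
  have h := exists_fun_fin_finrank_span_eq K s
  rw [hs, finrank_top] at h
  obtain ⟨v, hvs, -, hv⟩ := h
  exact ⟨v, hvs, hv⟩

section

variable {𝕜 E : Type*} [NontriviallyNormedField 𝕜] [CompleteSpace 𝕜]
  [NormedAddCommGroup E] [NormedSpace 𝕜 E] [FiniteDimensional 𝕜 E]

theorem Submodule.span_image_closure_eq {α : Type*} [TopologicalSpace α] {g : α → E}
    {s : Set α} (hg : ContinuousOn g (closure s)) :
    span 𝕜 (g '' closure s) = span 𝕜 (g '' s) := by
  refine le_antisymm (span_le.2 ?_) (span_mono (image_mono subset_closure))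
  calc g '' closure s ⊆ closure (g '' s) := hg.image_closure
    _ ⊆ span 𝕜 (g '' s) :=
      closure_minimal subset_span (span 𝕜 (g '' s)).closed_of_finiteDimensional

theorem exists_fin_forall_span_range_eq_top {X Q : Type*} [TopologicalSpace Q] [CompactSpace Q]
    {S : Set X} {g : X → Q → E} (hg : ∀ x ∈ S, Continuous (g x))
    (hspan : ∀ q, span 𝕜 ((g · q) '' S) = ⊤) :
    ∃ (N : ℕ) (s : Fin N → X), (∀ i, s i ∈ S) ∧
      ∀ q, span 𝕜 (range fun i => g (s i) q) = ⊤ := by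
  have hbasis (q : Q) : ∃ t : Fin (Module.finrank 𝕜 E) → X, (∀ i, t i ∈ S) ∧
      LinearIndependent 𝕜 fun i => g (t i) q := by
    obtain ⟨v, hvS, hv⟩ := exists_fin_finrank_linearIndependent_of_span_eq_top (hspan q)
    choose t htS htv using hvS
    exact ⟨t, htS, by simpa only [htv] using hv⟩
  choose t htS ht using hbasis
  let U (q : Q) : Set Q := {q' | LinearIndependent 𝕜 fun i => g (t q i) q'}
  have hU (q : Q) : IsOpen (U q) :=
    isOpen_setOfPred_linearIndependent.preimage
      (continuous_pi fun i => hg _ (htS q i))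
  obtain ⟨T, hT⟩ :=
    isCompact_univ.elim_finite_subcover U hU fun q _ => mem_iUnion.2 ⟨q, ht q⟩
  let e := Fintype.equivFin (T × Fin (Module.finrank 𝕜 E))
  refine ⟨_, fun k => t (e.symm k).1 (e.symm k).2, fun k => htS _ _, fun q => ?_⟩
  obtain ⟨q₀, hq₀T, hq⟩ := mem_iUnion₂.1 (hT (mem_univ q))
  refine eq_top_iff.2 ((hq.span_eq_top_of_card_eq_finrank' (Fintype.card_fin _)).ge.trans ?_)
  refine span_mono (range_subset_iff.2 fun i => ⟨e ⟨⟨q₀, hq₀T⟩, i⟩, ?_⟩)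
  simp only [Equiv.symm_apply_apply]

end

theorem spanning_points_in_subinterval_general
    (n : ℕ) (a b : ℝ) (ha : 0 ≤ a) (hab : a < b) (hb : b ≤ 1)
    (Q : Type*) [TopologicalSpace Q] [CompactSpace Q]
    (f : ℝ × Q → EuclideanSpace ℂ (Fin n))
    (hf : ContinuousOn f ((Set.Icc (0:ℝ) 1) ×ˢ (Set.univ : Set Q)))
    (hfull : ∀ q : Q,
      Submodule.span ℂ ((fun s => f (s, q)) '' Set.Icc a b) = ⊤) :
    ∃ (N : ℕ) (s : Fin N → ℝ),
      (∀ i, s i ∈ Set.Ioo a b) ∧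
      (∀ q : Q, Submodule.span ℂ
        (Set.range (fun i : Fin N => f (s i, q))) = ⊤) := by
  have hmem {x : ℝ} (q : Q) (hx : x ∈ Icc a b) : (x, q) ∈ Icc (0 : ℝ) 1 ×ˢ (univ : Set Q) :=
    ⟨⟨ha.trans hx.1, hx.2.trans hb⟩, trivial⟩
  refine exists_fin_forall_span_range_eq_top (g := fun x q => f (x, q))
    (fun x hx => ?_) fun q => ?_
  · exact hf.comp_continuous (Continuous.prodMk_right x) fun q => hmem q (Ioo_subset_Icc_self hx)
  · have hcont : ContinuousOn (fun x => f (x, q)) (closure (Ioo a b)) := by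
      rw [closure_Ioo hab.ne]
      exact hf.comp (Continuous.prodMk_left q).continuousOn fun x hx => hmem q hx
    rw [← span_image_closure_eq hcont, closure_Ioo hab.ne, hfull]

/-- If `f : I × Q → ℂⁿ` is continuous, `Q` compact Hausdorff, and `f(·,q)` is full on the
closed subinterval `I' = [a,b] ⊆ I = [0,1]` (with nonempty interior) for every `q ∈ Q`,
then there are finitely many points `s₁, …, s_N` in the interior of `I'` such that
`f(s₁,q), …, f(s_N,q)` span `ℂⁿ` for every `q ∈ Q`. -/
theorem spanning_points_in_subinterval
    (n : ℕ) (hn : 1 ≤ n) (a b : ℝ) (ha : 0 ≤ a) (hab : a < b) (hb : b ≤ 1)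
    (Q : Type*) [TopologicalSpace Q] [CompactSpace Q] [T2Space Q]
    (f : ℝ × Q → EuclideanSpace ℂ (Fin n))
    (hf : ContinuousOn f ((Set.Icc (0:ℝ) 1) ×ˢ (Set.univ : Set Q)))
    (hfull : ∀ q : Q,
      Submodule.span ℂ ((fun s => f (s, q)) '' Set.Icc a b) = ⊤) :
    ∃ (N : ℕ) (s : Fin N → ℝ),
      (∀ i, s i ∈ Set.Ioo a b) ∧
      (∀ q : Q, Submodule.span ℂ
        (Set.range (fun i : Fin N => f (s i, q))) = ⊤) :=
  spanning_points_in_subinterval_general n a b ha hab hb Q f hf hfull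
end

section
/- Let n ≥ 1 and I = [0,1]. Let α : I → ℂⁿ and f : I × I → ℂⁿ be continuous maps such that for every t ∈ I the path f(·,t) : I → ℂⁿ is full, and let ε > 0. Then there exists a continuous function h : I × I → ℂ ∖ {0} such that h(0,t) = h(1,t) = 1 for all t ∈ I and |∫₀¹ h(s,t) f(s,t) ds − α(t)| < ε for all t ∈ I. -/
/-!
Extend `f` continuously to the plane. For each `t` the Gram operator
`u ↦ ∫₀¹ ⟪f(s,t), u⟫ f(s,t) ds` is injective because `f(·,t)` is full, hence invertible, and
inverting it continuously in `t` gives a continuous `g` with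
`∫₀¹ g(s,t) f(s,t) ds = α(t) - ∫₀¹ f(s,t) ds`. This `g` may vanish, so instead take
`h = 1 + |sin 2πNs| b + sin 2πNs · (1 + |b|) i` with `b = g / ∫₀¹ |sin 2πx| dx`. It is `1` where
`sin 2πNs = 0`, in particular at `s = 0, 1`; elsewhere its imaginary part has the sign of
`sin 2πNs`, so `h ≠ 0`. As `N → ∞` the oscillating factors `|sin 2πNs|` and `sin 2πNs` converge
weakly to their means, uniformly in `t`, so `∫₀¹ h f ds → ∫₀¹ f ds + ∫₀¹ g f ds = α`.
-/

open MeasureTheory intervalIntegral Set Filter Function Real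

section Oscillation

variable {𝕜 E : Type*} [RCLike 𝕜] [NormedAddCommGroup E] [NormedSpace ℝ E] [NormedSpace 𝕜 E]
  [CompleteSpace E]

theorem Function.Periodic.integral_comp_mul_eq_zero {q : ℝ → 𝕜} (hq : Periodic q 1)
    (hq0 : ∫ x in (0:ℝ)..1, q x = 0) {N : ℝ} (hN : N ≠ 0) (k : ℝ) :
    ∫ s in k / N..(k + 1) / N, q (N * s) = 0 := by
  rw [integral_comp_mul_left _ hN, mul_div_cancel₀ _ hN, mul_div_cancel₀ _ hN,
    hq.intervalIntegral_add_eq k 0, zero_add, hq0, smul_zero]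

theorem norm_integral_smul_le_of_integral_eq_zero {φ : ℝ → 𝕜} {g : ℝ → E} {a b M δ : ℝ}
    (hab : a ≤ b) (hφ : Continuous φ) (hg : Continuous g) (hφ0 : ∫ s in a..b, φ s = 0)
    (hM : ∀ s ∈ Icc a b, ‖φ s‖ ≤ M) (hδ : ∀ s ∈ Icc a b, ‖g s - g a‖ ≤ δ) :
    ‖∫ s in a..b, φ s • g s‖ ≤ M * δ * (b - a) := by
  have hsub : ∫ s in a..b, φ s • (g s - g a) = ∫ s in a..b, φ s • g s := by
    simp_rw [smul_sub]
    rw [integral_sub ((by fun_prop : Continuous fun s => φ s • g s).intervalIntegrable _ _)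
      ((by fun_prop : Continuous fun s => φ s • g a).intervalIntegrable _ _),
      intervalIntegral.integral_smul_const, hφ0, zero_smul, sub_zero]
  rw [← hsub, ← abs_of_nonneg (sub_nonneg.2 hab)]
  refine norm_integral_le_of_norm_le_const fun s hs => ?_
  rw [uIoc_of_le hab] at hs
  rw [norm_smul]
  exact mul_le_mul (hM s (Ioc_subset_Icc_self hs)) (hδ s (Ioc_subset_Icc_self hs))
    (norm_nonneg _) ((norm_nonneg _).trans (hM s (Ioc_subset_Icc_self hs)))

theorem norm_integral_comp_mul_smul_le {q : ℝ → 𝕜} (hq : Continuous q) (hper : Periodic q 1)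
    (hq0 : ∫ x in (0:ℝ)..1, q x = 0) {M : ℝ} (hM : ∀ x, ‖q x‖ ≤ M) {g : ℝ → E}
    (hg : Continuous g) {N : ℕ} (hN : 0 < N) {δ : ℝ}
    (hδ : ∀ s ∈ Icc (0:ℝ) 1, ∀ s' ∈ Icc (0:ℝ) 1, |s - s'| ≤ 1 / N → ‖g s - g s'‖ ≤ δ) :
    ‖∫ s in (0:ℝ)..1, q (N * s) • g s‖ ≤ M * δ := by
  have hN' : (N : ℝ) ≠ 0 := by positivity
  have hφ : Continuous fun s : ℝ => q (N * s) := hq.comp (continuous_const_mul _)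
  have hpiece : ∀ k < N, ‖∫ s in (k : ℝ) / N..((k + 1 : ℕ) : ℝ) / N, q (N * s) • g s‖
      ≤ M * δ * (1 / N) := by
    intro k hk
    have hk' : ((k + 1 : ℕ) : ℝ) ≤ N := by exact_mod_cast hk
    have hmem : ∀ s ∈ Icc ((k : ℝ) / N) (((k + 1 : ℕ) : ℝ) / N), s ∈ Icc (0:ℝ) 1 := by
      intro s hs
      exact ⟨(by positivity : (0:ℝ) ≤ k / N).trans hs.1,
        hs.2.trans ((div_le_one (by positivity)).2 hk')⟩
    have hlen : ((k + 1 : ℕ) : ℝ) / N - k / N = 1 / N := by push_cast; ring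
    rw [← hlen]
    refine norm_integral_smul_le_of_integral_eq_zero (by gcongr; simp) hφ hg ?_
      (fun s _ => hM _)
      fun s hs => hδ s (hmem s hs) _ (hmem _ (left_mem_Icc.2 (hs.1.trans hs.2))) ?_
    · rw [Nat.cast_succ]; exact hper.integral_comp_mul_eq_zero hq0 hN' k
    · rw [abs_of_nonneg (sub_nonneg.2 hs.1), ← hlen]; linarith [hs.2]
  calc ‖∫ s in (0:ℝ)..1, q (N * s) • g s‖
      = ‖∑ k ∈ Finset.range N, ∫ s in (k : ℝ) / N..((k + 1 : ℕ) : ℝ) / N, q (N * s) • g s‖ := by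
        rw [sum_integral_adjacent_intervals (a := fun k : ℕ => (k : ℝ) / N)
          (f := fun s => q (N * s) • g s) fun k _ => (hφ.smul hg).intervalIntegrable _ _]
        simp [hN']
    _ ≤ ∑ _k ∈ Finset.range N, M * δ * (1 / N) :=
        (norm_sum_le _ _).trans (Finset.sum_le_sum fun k hk => hpiece k (Finset.mem_range.1 hk))
    _ = M * δ := by simp [field]

theorem Function.Periodic.tendstoUniformlyOn_integral_comp_mul_smul {T : Type*}
    [PseudoMetricSpace T] {q : ℝ → 𝕜} (hq : Continuous q) (hper : Periodic q 1)
    {G : ℝ × T → E} (hG : Continuous G) {K : Set T} (hK : IsCompact K) :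
    TendstoUniformlyOn (fun (N : ℕ) t => ∫ s in (0:ℝ)..1, q (N * s) • G (s, t))
      (fun t => (∫ x in (0:ℝ)..1, q x) • ∫ s in (0:ℝ)..1, G (s, t)) atTop K := by
  set m := ∫ x in (0:ℝ)..1, q x
  set q₀ : ℝ → 𝕜 := fun x => q x - m
  have hq₀ : Continuous q₀ := hq.sub continuous_const
  have hper₀ : Periodic q₀ 1 := fun x => by simp only [q₀, hper x]
  have hmean₀ : ∫ x in (0:ℝ)..1, q₀ x = 0 := by
    simp [q₀, integral_sub (hq.intervalIntegrable 0 1) intervalIntegrable_const, m]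
  obtain ⟨C, hC⟩ := isBounded_iff_forall_norm_le.1 (hper₀.isBounded_of_continuous one_ne_zero hq₀)
  set M := max C 1
  have hM : ∀ x, ‖q₀ x‖ ≤ M := fun x => (hC _ ⟨x, rfl⟩).trans (le_max_left _ _)
  have hMpos : 0 < M := zero_lt_one.trans_le (le_max_right _ _)
  have hdiff : ∀ (N : ℕ) t, (∫ s in (0:ℝ)..1, q (N * s) • G (s, t)) - m • ∫ s in (0:ℝ)..1, G (s, t)
      = ∫ s in (0:ℝ)..1, q₀ (N * s) • G (s, t) := by
    intro N t
    simp_rw [q₀, sub_smul]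
    rw [integral_sub
      ((by fun_prop : Continuous fun s => q (N * s) • G (s, t)).intervalIntegrable _ _)
      ((by fun_prop : Continuous fun s => m • G (s, t)).intervalIntegrable _ _),
      intervalIntegral.integral_smul]
  rw [Metric.tendstoUniformlyOn_iff]
  intro ε hε
  obtain ⟨δ, hδ, hG_uc⟩ := Metric.uniformContinuousOn_iff.1
    ((isCompact_Icc.prod hK).uniformContinuousOn_of_continuous hG.continuousOn) (ε / (2 * M))
      (by positivity)
  filter_upwards [eventually_gt_atTop 0,
    (tendsto_one_div_atTop_nhds_zero_nat (𝕜 := ℝ)).eventually (gt_mem_nhds hδ)] with N hN hNδ t ht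
  have hmod : ∀ s ∈ Icc (0:ℝ) 1, ∀ s' ∈ Icc (0:ℝ) 1, |s - s'| ≤ 1 / N →
      ‖G (s, t) - G (s', t)‖ ≤ ε / (2 * M) := fun s hs s' hs' hss' => by
    rw [← dist_eq_norm]
    refine (hG_uc _ ⟨hs, ht⟩ _ ⟨hs', ht⟩ ?_).le
    simpa [Prod.dist_eq, Real.dist_eq] using hss'.trans_lt hNδ
  rw [dist_comm, dist_eq_norm, hdiff]
  calc ‖∫ s in (0:ℝ)..1, q₀ (N * s) • G (s, t)‖ ≤ M * (ε / (2 * M)) :=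
        norm_integral_comp_mul_smul_le hq₀ hper₀ hmean₀ hM (by fun_prop) hN hmod
    _ = ε / 2 := by field_simp
    _ < ε := half_lt_self hε

end Oscillation

section Gram

variable {𝕜 E : Type*} [RCLike 𝕜] [NormedAddCommGroup E] [InnerProductSpace 𝕜 E]
  [NormedSpace ℝ E] [IsScalarTower ℝ 𝕜 E]

variable (𝕜) in
noncomputable def gramOperator (γ : ℝ → E) : E →L[𝕜] E :=
  ∫ s in (0:ℝ)..1, (innerSL 𝕜 (γ s)).smulRight (γ s)

variable {γ : ℝ → E}

theorem gramOperator_apply (hγ : Continuous γ) (u : E) :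
    gramOperator 𝕜 γ u = ∫ s in (0:ℝ)..1, inner 𝕜 (γ s) u • γ s :=
  ContinuousLinearMap.intervalIntegral_apply
    ((by fun_prop : Continuous fun s => (innerSL 𝕜 (γ s)).smulRight (γ s)).intervalIntegrable _ _) u

theorem inner_gramOperator_self [CompleteSpace E] (hγ : Continuous γ) (u : E) :
    inner 𝕜 u (gramOperator 𝕜 γ u) = ((∫ s in (0:ℝ)..1, ‖inner 𝕜 (γ s) u‖ ^ 2 : ℝ) : 𝕜) := by
  rw [gramOperator_apply hγ, ← RCLike.intervalIntegral_ofReal]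
  have := (innerSL 𝕜 u).intervalIntegral_comp_comm
    ((by fun_prop : Continuous fun s => inner 𝕜 (γ s) u • γ s).intervalIntegrable (μ := volume) 0 1)
  simp only [innerSL_apply_apply] at this
  rw [← this]
  refine integral_congr fun s _ => ?_
  rw [inner_smul_right, ← inner_conj_symm u (γ s), RCLike.mul_conj]
  norm_cast

theorem gramOperator_injective [CompleteSpace E] (hγ : Continuous γ)
    (hfull : Submodule.span 𝕜 (γ '' Icc 0 1) = ⊤) : Injective (gramOperator 𝕜 γ) := by
  refine (injective_iff_map_eq_zero _).2 fun u hu => ?_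
  have hint : ∫ s in (0:ℝ)..1, ‖inner 𝕜 (γ s) u‖ ^ 2 = 0 := by
    simpa [hu] using (inner_gramOperator_self (𝕜 := 𝕜) hγ u).symm
  have horth : ∀ s ∈ Icc (0:ℝ) 1, inner 𝕜 (γ s) u = 0 := by
    by_contra! ⟨s, hs, hne⟩
    refine (integral_pos zero_lt_one (by fun_prop) (fun _ _ => by positivity)
      ⟨s, hs, by positivity⟩).ne' hint
  have hspan : Submodule.span 𝕜 (γ '' Icc 0 1) ≤ (𝕜 ∙ u)ᗮ := by
    rw [Submodule.span_le]
    rintro _ ⟨s, hs, rfl⟩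
    exact Submodule.mem_orthogonal_singleton_iff_inner_left.2 (horth s hs)
  rw [hfull] at hspan
  exact inner_self_eq_zero.1 (Submodule.mem_orthogonal_singleton_iff_inner_left.1
    (hspan Submodule.mem_top))

theorem isUnit_gramOperator [FiniteDimensional 𝕜 E] (hγ : Continuous γ)
    (hfull : Submodule.span 𝕜 (γ '' Icc 0 1) = ⊤) : IsUnit (gramOperator 𝕜 γ) :=
  have := FiniteDimensional.complete 𝕜 E
  have hinj := gramOperator_injective hγ hfull
  ContinuousLinearMap.isUnit_iff_bijective.2 ⟨hinj, LinearMap.injective_iff_surjective.1 hinj⟩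

theorem exists_continuous_integral_smul_eq [FiniteDimensional 𝕜 E] {T : Type*}
    [TopologicalSpace T] {F : ℝ × T → E} (hF : Continuous F)
    (hfull : ∀ t, Submodule.span 𝕜 ((fun s => F (s, t)) '' Icc 0 1) = ⊤)
    {v : T → E} (hv : Continuous v) :
    ∃ g : ℝ × T → 𝕜, Continuous g ∧ ∀ t, ∫ s in (0:ℝ)..1, g (s, t) • F (s, t) = v t := by
  have := FiniteDimensional.complete 𝕜 E
  set A : T → E →L[𝕜] E := fun t => gramOperator 𝕜 fun s => F (s, t)
  have hA : Continuous A :=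
    continuous_parametric_intervalIntegral_of_continuous' (by fun_prop) 0 1
  have hAunit : ∀ t, IsUnit (A t) := fun t => isUnit_gramOperator (by fun_prop) (hfull t)
  have hAinv : Continuous fun t => Ring.inverse (A t) := by
    refine continuous_iff_continuousAt.2 fun t => ?_
    have hinv : ContinuousAt Ring.inverse (A t) := by
      simpa using NormedRing.inverse_continuousAt (hAunit t).unit
    exact hinv.comp hA.continuousAt
  set u : T → E := fun t => Ring.inverse (A t) (v t)
  have hu : Continuous u := hAinv.clm_apply hv
  refine ⟨fun p => inner 𝕜 (F p) (u p.2), by fun_prop, fun t => ?_⟩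
  change ∫ s in (0:ℝ)..1, inner 𝕜 (F (s, t)) (u t) • F (s, t) = v t
  rw [← gramOperator_apply (by fun_prop)]
  change (A t * Ring.inverse (A t)) (v t) = v t
  rw [Ring.mul_inverse_cancel _ (hAunit t)]
  rfl

end Gram

theorem Real.periodic_sin_two_pi_mul : Periodic (fun x => sin (2 * π * x)) 1 := by
  have := sin_periodic.const_mul (2 * π)
  rwa [inv_mul_cancel₀ (by positivity)] at this

theorem Real.sin_two_pi_mul_natCast (N : ℕ) : sin (2 * π * N) = 0 := by
  simpa [mul_comm, mul_left_comm] using sin_nat_mul_pi (2 * N)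

theorem Real.integral_sin_two_pi_mul : ∫ x in (0:ℝ)..1, sin (2 * π * x) = 0 := by
  simp [integral_comp_mul_left sin (by positivity : 2 * π ≠ 0)]

theorem Real.integral_abs_sin_two_pi_mul_pos : 0 < ∫ x in (0:ℝ)..1, |sin (2 * π * x)| := by
  refine integral_pos zero_lt_one (by fun_prop) (fun _ _ => abs_nonneg _)
    ⟨1 / 4, by norm_num, ?_⟩
  rw [show 2 * π * (1 / 4) = π / 2 by ring, sin_pi_div_two]
  norm_num

section Multiplier

open Complex

theorem one_add_abs_mul_add_mul_I_ne_zero (x : ℝ) (b : ℂ) :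
    1 + ((|x| : ℝ) : ℂ) * b + x * ((1 + ‖b‖) * I) ≠ 0 := by
  rcases eq_or_ne x 0 with rfl | hx
  · simp
  intro h
  have him : |x| * b.im + x * (1 + ‖b‖) = 0 := by simpa using congrArg im h
  have : |x| * (1 + ‖b‖) ≤ |x| * ‖b‖ := by
    calc |x| * (1 + ‖b‖) = |x * (1 + ‖b‖)| := by
          rw [abs_mul, abs_of_pos (by positivity : 0 < 1 + ‖b‖)]
      _ = |x| * |b.im| := by rw [eq_neg_of_add_eq_zero_right him, abs_neg, abs_mul, abs_abs]
      _ ≤ |x| * ‖b‖ := by gcongr; exact abs_im_le_norm b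
  nlinarith [abs_pos.2 hx]

noncomputable def sinMultiplier (N : ℕ) (b : ℂ) (s : ℝ) : ℂ :=
  1 + ((|sin (2 * π * (N * s))| : ℝ) : ℂ) * b + ((sin (2 * π * (N * s)) : ℝ) : ℂ) * ((1 + ‖b‖) * I)

theorem sinMultiplier_ne_zero (N : ℕ) (b : ℂ) (s : ℝ) : sinMultiplier N b s ≠ 0 :=
  one_add_abs_mul_add_mul_I_ne_zero _ _

theorem sinMultiplier_zero (N : ℕ) (b : ℂ) : sinMultiplier N b 0 = 1 := by
  simp [sinMultiplier]

theorem sinMultiplier_one (N : ℕ) (b : ℂ) : sinMultiplier N b 1 = 1 := by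
  simp only [sinMultiplier, mul_one, sin_two_pi_mul_natCast, abs_zero, ofReal_zero, zero_mul,
    add_zero]

@[fun_prop]
theorem Continuous.sinMultiplier {X : Type*} [TopologicalSpace X] (N : ℕ) {b : X → ℂ}
    {s : X → ℝ} (hb : Continuous b) (hs : Continuous s) :
    Continuous fun x => _root_.sinMultiplier N (b x) (s x) := by
  unfold _root_.sinMultiplier
  fun_prop

theorem tendstoUniformlyOn_integral_sinMultiplier_smul {E : Type*} [NormedAddCommGroup E]
    [NormedSpace ℂ E] [NormedSpace ℝ E] [CompleteSpace E] {T : Type*} [PseudoMetricSpace T]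
    {b : ℝ × T → ℂ} (hb : Continuous b) {F : ℝ × T → E} (hF : Continuous F) {K : Set T}
    (hK : IsCompact K) :
    TendstoUniformlyOn (fun (N : ℕ) t => (∫ s in (0:ℝ)..1, sinMultiplier N (b (s, t)) s • F (s, t))
        - ∫ s in (0:ℝ)..1, F (s, t))
      (fun t => ((∫ x in (0:ℝ)..1, |sin (2 * π * x)| : ℝ) : ℂ) •
        ∫ s in (0:ℝ)..1, b (s, t) • F (s, t))
      atTop K := by
  set q₁ : ℝ → ℂ := fun x => ((|sin (2 * π * x)| : ℝ) : ℂ)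
  set q₂ : ℝ → ℂ := fun x => ((sin (2 * π * x) : ℝ) : ℂ)
  set c : ℝ × T → ℂ := fun p => (1 + ‖b p‖) * I
  have h₁ := (periodic_sin_two_pi_mul.comp fun y => ((|y| : ℝ) : ℂ)
    ).tendstoUniformlyOn_integral_comp_mul_smul (q := q₁) (by fun_prop)
      (G := fun p => b p • F p) (by fun_prop) hK
  have h₂ := (periodic_sin_two_pi_mul.comp ofReal).tendstoUniformlyOn_integral_comp_mul_smul
    (q := q₂) (by fun_prop) (G := fun p => c p • F p) (by fun_prop) hK
  have hsplit : ∀ (N : ℕ) t, (∫ s in (0:ℝ)..1, q₁ (N * s) • (b (s, t) • F (s, t)))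
        + ∫ s in (0:ℝ)..1, q₂ (N * s) • (c (s, t) • F (s, t))
      = (∫ s in (0:ℝ)..1, sinMultiplier N (b (s, t)) s • F (s, t)) - ∫ s in (0:ℝ)..1, F (s, t) := by
    intro N t
    rw [eq_sub_iff_add_eq', ← intervalIntegral.integral_add, ← intervalIntegral.integral_add]
    · simp only [sinMultiplier, add_smul, mul_smul, one_smul, add_assoc, q₁, q₂, c]
    all_goals exact Continuous.intervalIntegrable (by fun_prop) _ _
  have hmean₂ : ∫ x in (0:ℝ)..1, q₂ x = 0 := by
    simp only [q₂, intervalIntegral.integral_ofReal, integral_sin_two_pi_mul, ofReal_zero]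
  refine ((h₁.add h₂).congr (Eventually.of_forall fun N t _ => hsplit N t)).congr_right
    fun t _ => ?_
  simp only [Pi.add_apply, hmean₂, zero_smul, add_zero, q₁, intervalIntegral.integral_ofReal]

theorem exists_multiplier_integral_smul_approx {E : Type*} [NormedAddCommGroup E]
    [InnerProductSpace ℂ E] [NormedSpace ℝ E] [IsScalarTower ℝ ℂ E] [FiniteDimensional ℂ E]
    {T : Type*} [PseudoMetricSpace T] {F : ℝ × T → E} (hF : Continuous F)
    (hfull : ∀ t, Submodule.span ℂ ((fun s => F (s, t)) '' Icc 0 1) = ⊤)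
    {w : T → E} (hw : Continuous w) {K : Set T} (hK : IsCompact K) {ε : ℝ} (hε : 0 < ε) :
    ∃ h : ℝ × T → ℂ, Continuous h ∧ (∀ p, h p ≠ 0) ∧ (∀ t, h (0, t) = 1 ∧ h (1, t) = 1) ∧
      ∀ t ∈ K, ‖(∫ s in (0:ℝ)..1, h (s, t) • F (s, t)) - w t‖ < ε := by
  have := FiniteDimensional.complete ℂ E
  have hFint : Continuous fun t => ∫ s in (0:ℝ)..1, F (s, t) :=
    continuous_parametric_intervalIntegral_of_continuous' (by fun_prop) 0 1
  obtain ⟨g, hg, hgF⟩ := exists_continuous_integral_smul_eq hF hfull (hw.sub hFint)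
  set m : ℂ := ((∫ x in (0:ℝ)..1, |sin (2 * π * x)| : ℝ) : ℂ)
  have hm : m ≠ 0 := ofReal_ne_zero.2 integral_abs_sin_two_pi_mul_pos.ne'
  have hconv := tendstoUniformlyOn_integral_sinMultiplier_smul (b := fun p => g p / m)
    (by fun_prop) hF hK
  obtain ⟨N, hN⟩ := (Metric.tendstoUniformlyOn_iff.1 hconv ε hε).exists
  refine ⟨fun p => sinMultiplier N (g p / m) p.1, by fun_prop,
    fun p => sinMultiplier_ne_zero _ _ _,
    fun t => ⟨sinMultiplier_zero _ _, sinMultiplier_one _ _⟩, fun t ht => ?_⟩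
  have hlimit : m • ∫ s in (0:ℝ)..1, (g (s, t) / m) • F (s, t)
      = w t - ∫ s in (0:ℝ)..1, F (s, t) := by
    rw [← intervalIntegral.integral_smul]
    simp only [smul_smul, mul_div_cancel₀ _ hm]
    exact hgF t
  have hdist := hN t ht
  rwa [hlimit, dist_eq_norm', sub_sub_sub_cancel_right] at hdist

end Multiplier

theorem paths_with_approximate_integrals_general
    (n : ℕ)
    (α : ℝ → EuclideanSpace ℂ (Fin n)) (hα : ContinuousOn α (Set.Icc 0 1))
    (f : ℝ × ℝ → EuclideanSpace ℂ (Fin n))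
    (hf : ContinuousOn f ((Set.Icc (0:ℝ) 1) ×ˢ (Set.Icc (0:ℝ) 1)))
    (hfull : ∀ t ∈ Set.Icc (0:ℝ) 1,
      Submodule.span ℂ ((fun s => f (s, t)) '' Set.Icc (0:ℝ) 1) = ⊤)
    (ε : ℝ) (hε : 0 < ε) :
    ∃ h : ℝ × ℝ → ℂ,
      ContinuousOn h ((Set.Icc (0:ℝ) 1) ×ˢ (Set.Icc (0:ℝ) 1)) ∧
      (∀ p ∈ (Set.Icc (0:ℝ) 1) ×ˢ (Set.Icc (0:ℝ) 1), h p ≠ 0) ∧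
      (∀ t ∈ Set.Icc (0:ℝ) 1, h (0, t) = 1 ∧ h (1, t) = 1) ∧
      (∀ t ∈ Set.Icc (0:ℝ) 1,
        ‖(∫ s in (0:ℝ)..1, h (s, t) • f (s, t)) - α t‖ < ε) := by
  set clamp : ℝ → ℝ := fun x => projIcc (0:ℝ) 1 zero_le_one x
  have hclamp : Continuous clamp := continuous_subtype_val.comp continuous_projIcc
  have hclamp_mem : ∀ x, clamp x ∈ Icc (0:ℝ) 1 := fun x => (projIcc _ _ _ x).2
  have hclamp_eq : ∀ x ∈ Icc (0:ℝ) 1, clamp x = x := fun x hx => by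
    simp [clamp, projIcc_of_mem _ hx]
  set F : ℝ × ℝ → EuclideanSpace ℂ (Fin n) := fun p => f (clamp p.1, clamp p.2)
  have hF : Continuous F :=
    hf.comp_continuous (by fun_prop) fun p => ⟨hclamp_mem p.1, hclamp_mem p.2⟩
  have hFfull : ∀ t, Submodule.span ℂ ((fun s => F (s, t)) '' Icc 0 1) = ⊤ := fun t => by
    rw [← hfull (clamp t) (hclamp_mem t)]
    exact congrArg _ (image_congr fun s hs => by simp only [F, hclamp_eq s hs])
  obtain ⟨h, hh, hne, hend, happrox⟩ := exists_multiplier_integral_smul_approx hF hFfull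
    (hα.comp_continuous hclamp hclamp_mem) isCompact_Icc hε
  refine ⟨h, hh.continuousOn, fun p _ => hne p, fun t _ => hend t, fun t ht => ?_⟩
  have hint : ∫ s in (0:ℝ)..1, h (s, t) • f (s, t) = ∫ s in (0:ℝ)..1, h (s, t) • F (s, t) :=
    integral_congr fun s hs => by
      rw [uIcc_of_le zero_le_one] at hs
      simp only [F, hclamp_eq s hs, hclamp_eq t ht]
  simpa [hint, hclamp_eq t ht] using happrox t ht

/-- Approximate version of the prescribed-integrals lemma: given continuous `α : I → ℂⁿ` and
`f : I × I → ℂⁿ` with `f(·,t)` full for every `t ∈ I`, and given `ε > 0`, there is a continuous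
nonvanishing `h : I × I → ℂ∗` with `h(0,t) = h(1,t) = 1` and
`‖∫₀¹ h(s,t) f(s,t) ds − α(t)‖ < ε` for all `t ∈ I`. -/
theorem paths_with_approximate_integrals
    (n : ℕ) (hn : 1 ≤ n)
    (α : ℝ → EuclideanSpace ℂ (Fin n)) (hα : ContinuousOn α (Set.Icc 0 1))
    (f : ℝ × ℝ → EuclideanSpace ℂ (Fin n))
    (hf : ContinuousOn f ((Set.Icc (0:ℝ) 1) ×ˢ (Set.Icc (0:ℝ) 1)))
    (hfull : ∀ t ∈ Set.Icc (0:ℝ) 1,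
      Submodule.span ℂ ((fun s => f (s, t)) '' Set.Icc (0:ℝ) 1) = ⊤)
    (ε : ℝ) (hε : 0 < ε) :
    ∃ h : ℝ × ℝ → ℂ,
      ContinuousOn h ((Set.Icc (0:ℝ) 1) ×ˢ (Set.Icc (0:ℝ) 1)) ∧
      (∀ p ∈ (Set.Icc (0:ℝ) 1) ×ˢ (Set.Icc (0:ℝ) 1), h p ≠ 0) ∧
      (∀ t ∈ Set.Icc (0:ℝ) 1, h (0, t) = 1 ∧ h (1, t) = 1) ∧
      (∀ t ∈ Set.Icc (0:ℝ) 1,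
        ‖(∫ s in (0:ℝ)..1, h (s, t) • f (s, t)) - α t‖ < ε) :=
  paths_with_approximate_integrals_general n α hα f hf hfull ε hε
end

section
/- Let n ≥ 2 and let S ⊆ 𝔄* be a nonempty set of nonzero null vectors in ℂⁿ. Then the ℂ-linear span of the union ⋃_{z∈S} T_z𝔄 of the tangent spaces to the null quadric at the points of S equals all of ℂⁿ if and only if S is not contained in a single complex ray ℂ·ν for some ν ∈ 𝔄* (equivalently, if and only if S contains two non-colinear vectors). -/
/-!
The tangent space at `z` is the kernel of the linear form `v ↦ z ⬝ᵥ v`, a hyperplane as soon as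
`z ≠ 0`. Kernels of proportional forms coincide, so if `S` lies on one ray the span is that single
hyperplane; two distinct hyperplanes are distinct coatoms of the submodule lattice, so they already
span the whole space.
-/

open Module Submodule

section

variable {K V : Type*} [Field K] [AddCommGroup V] [Module K V]

theorem Submodule.mem_span_singleton_symm {x y : V} (hx : x ≠ 0) (h : x ∈ K ∙ y) :
    y ∈ K ∙ x := by
  obtain ⟨c, rfl⟩ := mem_span_singleton.1 h
  have hc : c ≠ 0 := by rintro rfl; simp at hx
  simpa [smul_smul, hc] using smul_mem (K ∙ c • y) c⁻¹ (mem_span_singleton_self _)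

namespace Module.Dual

theorem ker_le_ker_iff_mem_span_singleton {f g : Dual K V} :
    LinearMap.ker f ≤ LinearMap.ker g ↔ g ∈ K ∙ f := by
  refine ⟨fun h ↦ ?_, fun h ↦ ?_⟩
  · simpa using mem_span_of_iInf_ker_le_ker (L := fun _ : Unit ↦ f) (by simpa using h)
  · obtain ⟨c, rfl⟩ := mem_span_singleton.1 h
    exact LinearMap.ker_le_ker_smul f c

theorem isCoatom_ker {f : Dual K V} (hf : f ≠ 0) : IsCoatom (LinearMap.ker f) :=
  LinearMap.isCoatom_ker_of_surjective (LinearMap.surjective_of_ne_zero hf)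

theorem span_biUnion_ker_eq_top_iff {F : Set (Dual K V)} (hF : 0 ∉ F) {f : Dual K V}
    (hf : f ∈ F) :
    span K (⋃ g ∈ F, (LinearMap.ker g : Set V)) = ⊤ ↔ ¬ F ⊆ K ∙ f := by
  have hf0 : f ≠ 0 := ne_of_mem_of_not_mem hf hF
  constructor
  · intro htop hFf
    have hle : span K (⋃ g ∈ F, (LinearMap.ker g : Set V)) ≤ LinearMap.ker f :=
      span_le.2 <| Set.iUnion₂_subset fun g hg ↦ ker_le_ker_iff_mem_span_singleton.2 <|
        mem_span_singleton_symm (ne_of_mem_of_not_mem hg hF) (hFf hg)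
    exact (isCoatom_ker hf0).1 (top_le_iff.1 (htop ▸ hle))
  · intro hFf
    obtain ⟨g, hg, hgf⟩ := Set.not_subset.1 hFf
    have hne : LinearMap.ker f ≠ LinearMap.ker g :=
      fun h ↦ hgf (ker_le_ker_iff_mem_span_singleton.1 h.le)
    rw [eq_top_iff, ← (isCoatom_ker hf0).sup_eq_top_of_ne
      (isCoatom_ker (ne_of_mem_of_not_mem hg hF)) hne]
    exact sup_le (fun _ hv ↦ subset_span (Set.mem_biUnion hf hv))
      (fun _ hv ↦ subset_span (Set.mem_biUnion hg hv))

end Module.Dual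

end

theorem span_of_tangent_spaces_eq_top_iff_not_in_ray_general
    (n : ℕ) (S : Set (Fin n → ℂ)) (hS : S.Nonempty)
    (hSnull : ∀ z ∈ S, (∑ j : Fin n, (z j) ^ 2 = 0) ∧ z ≠ 0) :
    Submodule.span ℂ (⋃ z ∈ S, {v : Fin n → ℂ | ∑ j : Fin n, z j * v j = 0}) = ⊤
      ↔ ¬ ∃ ν : Fin n → ℂ, (∑ j : Fin n, (ν j) ^ 2 = 0) ∧ ν ≠ 0 ∧
            S ⊆ {u : Fin n → ℂ | ∃ c : ℂ, u = c • ν} := by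
  obtain ⟨z, hz⟩ := hS
  set D := dotProductEquiv ℂ (Fin n)
  have htangent : (⋃ z ∈ S, {v : Fin n → ℂ | ∑ j : Fin n, z j * v j = 0}) =
      ⋃ g ∈ D '' S, (LinearMap.ker g : Set (Fin n → ℂ)) := by
    rw [Set.biUnion_image]; rfl
  have hrays (ν : Fin n → ℂ) : {u : Fin n → ℂ | ∃ c : ℂ, u = c • ν} = (ℂ ∙ ν : Set _) := by
    ext u; simp [mem_span_singleton, eq_comm]
  have hray : (∃ ν : Fin n → ℂ, (∑ j : Fin n, (ν j) ^ 2 = 0) ∧ ν ≠ 0 ∧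
      S ⊆ {u : Fin n → ℂ | ∃ c : ℂ, u = c • ν}) ↔ S ⊆ ℂ ∙ z := by
    simp only [hrays]
    refine ⟨fun ⟨ν, _, _, hSν⟩ u hu ↦ ?_, fun hSz ↦ ⟨z, (hSnull z hz).1, (hSnull z hz).2, hSz⟩⟩
    exact mem_span_singleton_trans (hSν hu) (mem_span_singleton_symm (hSnull z hz).2 (hSν hz))
  have hD : D ⁻¹' (ℂ ∙ D z : Set _) = ℂ ∙ z := by
    ext u
    simpa [Set.image_singleton] using
      apply_mem_span_image_iff_mem_span (f := D.toLinearMap) (x := u) (s := {z}) D.injective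
  rw [htangent, Module.Dual.span_biUnion_ker_eq_top_iff (f := D z) ?_ (Set.mem_image_of_mem D hz),
    hray, Set.image_subset_iff, hD]
  rintro ⟨u, hu, hDu⟩
  exact (hSnull u hu).2 (D.map_eq_zero_iff.1 hDu)

/-- For a nonempty set `S` of nonzero null vectors in `ℂⁿ` (`n ≥ 2`), the `ℂ`-linear span
of the union of the tangent spaces `T_z𝔄 = {v : ∑ⱼ zⱼ vⱼ = 0}` over `z ∈ S` equals `ℂⁿ`
if and only if `S` is not contained in a single complex ray `ℂ·ν` with `ν ∈ 𝔄*`. -/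
theorem span_of_tangent_spaces_eq_top_iff_not_in_ray
    (n : ℕ) (hn : 2 ≤ n) (S : Set (Fin n → ℂ)) (hS : S.Nonempty)
    (hSnull : ∀ z ∈ S, (∑ j : Fin n, (z j) ^ 2 = 0) ∧ z ≠ 0) :
    Submodule.span ℂ (⋃ z ∈ S, {v : Fin n → ℂ | ∑ j : Fin n, z j * v j = 0}) = ⊤
      ↔ ¬ ∃ ν : Fin n → ℂ, (∑ j : Fin n, (ν j) ^ 2 = 0) ∧ ν ≠ 0 ∧
            S ⊆ {u : Fin n → ℂ | ∃ c : ℂ, u = c • ν} :=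
  span_of_tangent_spaces_eq_top_iff_not_in_ray_general n S hS hSnull
end

section
/- Define Z : ℂ ∖ {0} → ℂ⁴ by Z(ζ) = ( i(ζ + 1/ζ), ζ − 1/ζ, (i/2)(ζ² − 1/ζ²), (1/2)(ζ² + 1/ζ²) ). Then Z is holomorphic, its derivative satisfies ∑_{j=1}^4 (Zⱼ'(ζ))² = 0 and Z'(ζ) ≠ 0 for every ζ ∈ ℂ ∖ {0} (so Z' takes values in the punctured null quadric 𝔄* ⊆ ℂ⁴), and the harmonic map X = Re ∘ Z : ℂ ∖ {0} → ℝ⁴ is a proper map, i.e. the preimage under X of every compact subset of ℝ⁴ is compact. -/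
/-!
With `w = ζ²`, the last two coordinates of `Z` are `(i/2)(w - 1/w)` and `(1/2)(w + 1/w)`; their
real parts `x, y` satisfy `y - i x = (w + 1/w̄)/2`, a complex number of modulus
`(|ζ|² + |ζ|⁻²)/2`. So `‖X ζ‖` blows up both as `ζ → 0` and as `ζ → ∞`, the preimage of a
bounded set lies in a closed annulus around `0`, and `X` is continuous there.
-/

open Complex ComplexConjugate Metric

theorem isCompact_setOf_ne_zero_and_mem {E F : Type*} [NormedAddCommGroup E] [ProperSpace E]
    [NormedAddCommGroup F] {f : E → F} {C : ℝ} (hf : ContinuousOn f {0}ᶜ)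
    (hgrowth : ∀ z ≠ 0, ‖z‖ ≤ C * ‖f z‖ ∧ ‖z‖⁻¹ ≤ C * ‖f z‖) {K : Set F}
    (hK : IsCompact K) :
    IsCompact {z | z ≠ 0 ∧ f z ∈ K} := by
  obtain ⟨M, -, hM⟩ := hK.isBounded.exists_pos_norm_le
  set R := max (C * M) 1
  have hR : 0 < R := lt_max_of_lt_right one_pos
  set A := closedBall (0 : E) R \ ball 0 R⁻¹
  have hA : IsCompact A := (isCompact_closedBall 0 R).diff isOpen_ball
  have hA0 : A ⊆ {0}ᶜ := fun z hz hz0 => hz.2 (by simp [Set.mem_singleton_iff.mp hz0, hR])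
  have hsub : {z | z ≠ 0 ∧ f z ∈ K} ⊆ A := by
    rintro z ⟨hz, hzK⟩
    obtain ⟨hle, hinv⟩ := hgrowth z hz
    have hC : 0 ≤ C := by
      by_contra! hC
      nlinarith [norm_pos_iff.mpr hz, norm_nonneg (f z)]
    have hCM : C * ‖f z‖ ≤ R :=
      (mul_le_mul_of_nonneg_left (hM _ hzK) hC).trans (le_max_left _ _)
    refine ⟨mem_closedBall_zero_iff.mpr (hle.trans hCM), fun hlt => ?_⟩
    have hRz : R⁻¹ ≤ ‖z‖ := inv_le_of_inv_le₀ (norm_pos_iff.mpr hz) (hinv.trans hCM)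
    exact (mem_ball_zero_iff.mp hlt).not_ge hRz
  have hS : {z | z ≠ 0 ∧ f z ∈ K} = A ∩ f ⁻¹' K :=
    Set.Subset.antisymm (fun z hz => ⟨hsub hz, hz.2⟩) fun z hz => ⟨hA0 hz.1, hz.2⟩
  rw [hS]
  exact hA.of_isClosed_subset ((hf.mono hA0).preimage_isClosed_of_isClosed hA.isClosed
    hK.isClosed) Set.inter_subset_left

theorem re_add_sub_I_mul_re_I_mul_sub (a b : ℂ) :
    ((a + b).re : ℂ) - I * (I * (a - b)).re = a + conj b := by
  apply Complex.ext <;> simp [sub_eq_add_neg]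

theorem norm_add_inv_conj (w : ℂ) : ‖w + (conj w)⁻¹‖ = ‖w‖ + ‖w‖⁻¹ := by
  have hw : w + (conj w)⁻¹ = w * ((1 + (‖w‖ ^ 2)⁻¹ : ℝ) : ℂ) := by
    rw [← normSq_eq_norm_sq, inv_def, conj_conj, normSq_conj]
    push_cast
    ring
  rw [hw, norm_mul, norm_real, Real.norm_of_nonneg (by positivity)]
  rcases eq_or_ne ‖w‖ 0 with h | h
  · simp [h]
  · field_simp

theorem le_sq_add_inv_sq {s : ℝ} (hs : 0 < s) : s ≤ s ^ 2 + (s ^ 2)⁻¹ := by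
  rcases le_or_gt 1 s with h | h
  · nlinarith [inv_pos.mpr (pow_pos hs 2)]
  · have : 1 ≤ (s ^ 2)⁻¹ := one_le_inv₀ (pow_pos hs 2) |>.mpr (by nlinarith)
    nlinarith

noncomputable def mobiusCurve (ζ : ℂ) : Fin 4 → ℂ :=
  ![I * (ζ + ζ⁻¹), ζ - ζ⁻¹,
    (I / 2) * (ζ ^ 2 - (ζ ^ 2)⁻¹), (1 / 2) * (ζ ^ 2 + (ζ ^ 2)⁻¹)]

noncomputable def mobiusCurveDeriv (ζ : ℂ) : Fin 4 → ℂ :=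
  ![I * (1 - (ζ ^ 2)⁻¹), 1 + (ζ ^ 2)⁻¹, I * (ζ + (ζ ^ 3)⁻¹), ζ - (ζ ^ 3)⁻¹]

theorem hasDerivAt_mobiusCurve {ζ : ℂ} (hζ : ζ ≠ 0) :
    HasDerivAt mobiusCurve (mobiusCurveDeriv ζ) ζ := by
  have hζ2 : ζ ^ 2 ≠ 0 := pow_ne_zero 2 hζ
  rw [hasDerivAt_pi]
  intro i
  fin_cases i
  · refine (((hasDerivAt_id ζ).add (hasDerivAt_inv hζ)).const_mul I).congr_deriv ?_
    simp [mobiusCurveDeriv, sub_eq_add_neg]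
  · refine ((hasDerivAt_id ζ).sub (hasDerivAt_inv hζ)).congr_deriv ?_
    simp [mobiusCurveDeriv]
  · refine (((hasDerivAt_pow 2 ζ).sub ((hasDerivAt_pow 2 ζ).inv hζ2)).const_mul
      (I / 2)).congr_deriv ?_
    simp only [mobiusCurveDeriv, Fin.reduceFinMk, Matrix.cons_val]
    field_simp
    ring
  · refine (((hasDerivAt_pow 2 ζ).add ((hasDerivAt_pow 2 ζ).inv hζ2)).const_mul
      (1 / 2 : ℂ)).congr_deriv ?_
    simp only [mobiusCurveDeriv, Fin.reduceFinMk, Matrix.cons_val]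
    field_simp
    ring

theorem differentiableOn_mobiusCurve : DifferentiableOn ℂ mobiusCurve {0}ᶜ :=
  fun _ hζ => (hasDerivAt_mobiusCurve hζ).differentiableAt.differentiableWithinAt

theorem mobiusCurveDeriv_ne_zero (ζ : ℂ) : mobiusCurveDeriv ζ ≠ 0 := by
  intro h
  have h0 : I * (1 - (ζ ^ 2)⁻¹) = 0 := congrFun h 0
  have h1 : 1 + (ζ ^ 2)⁻¹ = 0 := congrFun h 1
  have : 2 * I = 0 := by linear_combination h0 + I * h1
  simp at this

theorem sum_sq_mobiusCurveDeriv {ζ : ℂ} (hζ : ζ ≠ 0) :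
    ∑ j, mobiusCurveDeriv ζ j ^ 2 = 0 := by
  simp only [Fin.sum_univ_four, mobiusCurveDeriv, Matrix.cons_val, mul_pow, I_sq]
  field_simp
  ring

theorem continuousOn_re_mobiusCurve :
    ContinuousOn (fun ζ j => (mobiusCurve ζ j).re) {0}ᶜ :=
  continuousOn_pi.mpr fun j => continuous_re.comp_continuousOn
    (continuousOn_pi.mp differentiableOn_mobiusCurve.continuousOn j)

theorem norm_sq_add_inv_le_norm_re_mobiusCurve (ζ : ℂ) :
    ‖ζ‖ ^ 2 + (‖ζ‖ ^ 2)⁻¹ ≤ 4 * ‖fun j => (mobiusCurve ζ j).re‖ := by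
  set x : Fin 4 → ℝ := fun j => (mobiusCurve ζ j).re
  have hx : (x 3 : ℂ) - I * x 2 = (ζ ^ 2 + (conj (ζ ^ 2))⁻¹) / 2 := by
    have h2 : mobiusCurve ζ 2 = I * (ζ ^ 2 / 2 - (ζ ^ 2)⁻¹ / 2) := by
      simp only [mobiusCurve, Matrix.cons_val]
      ring
    have h3 : mobiusCurve ζ 3 = ζ ^ 2 / 2 + (ζ ^ 2)⁻¹ / 2 := by
      simp only [mobiusCurve, Matrix.cons_val]
      ring
    simp only [x, h2, h3, re_add_sub_I_mul_re_I_mul_sub, map_div₀, map_inv₀, map_ofNat]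
    ring
  calc ‖ζ‖ ^ 2 + (‖ζ‖ ^ 2)⁻¹ = 2 * ‖(x 3 : ℂ) - I * x 2‖ := by
        rw [hx, norm_div, norm_add_inv_conj, norm_pow, RCLike.norm_ofNat]
        ring
    _ ≤ 2 * (|x 3| + |x 2|) := by
        gcongr
        refine (norm_sub_le _ _).trans ?_
        simp
    _ ≤ 2 * (‖x‖ + ‖x‖) := by
        gcongr <;> exact norm_le_pi_norm x _
    _ = 4 * ‖x‖ := by ring

/-- The map `Z(ζ) = (i(ζ + 1/ζ), ζ − 1/ζ, (i/2)(ζ² − 1/ζ²), (1/2)(ζ² + 1/ζ²))` is a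
holomorphic null immersion of `ℂ ∖ {0}` into `ℂ⁴` (its derivative is nowhere vanishing and
takes values in the punctured null quadric), and `X = Re ∘ Z : ℂ ∖ {0} → ℝ⁴` is a proper
map: preimages of compact sets are compact. -/
theorem proper_minimal_Mobius_strip_null_curve
    (Z : ℂ → Fin 4 → ℂ)
    (hZ : ∀ ζ : ℂ, Z ζ = ![Complex.I * (ζ + ζ⁻¹), ζ - ζ⁻¹,
        (Complex.I / 2) * (ζ ^ 2 - (ζ ^ 2)⁻¹), (1 / 2) * (ζ ^ 2 + (ζ ^ 2)⁻¹)])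
    (X : ℂ → Fin 4 → ℝ)
    (hX : ∀ ζ : ℂ, ∀ j : Fin 4, X ζ j = (Z ζ j).re) :
    DifferentiableOn ℂ Z {(0:ℂ)}ᶜ ∧
    (∀ ζ : ℂ, ζ ≠ 0 → deriv Z ζ ≠ 0 ∧ ∑ j : Fin 4, (deriv Z ζ j) ^ 2 = 0) ∧
    (∀ K : Set (Fin 4 → ℝ), IsCompact K →
      IsCompact {ζ : ℂ | ζ ≠ 0 ∧ X ζ ∈ K}) := by
  obtain rfl : Z = mobiusCurve := funext hZ
  obtain rfl : X = fun ζ j => (mobiusCurve ζ j).re := funext fun ζ => funext (hX ζ)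
  refine ⟨differentiableOn_mobiusCurve, fun ζ hζ => ?_, fun K hK => ?_⟩
  · rw [(hasDerivAt_mobiusCurve hζ).deriv]
    exact ⟨mobiusCurveDeriv_ne_zero ζ, sum_sq_mobiusCurveDeriv hζ⟩
  refine isCompact_setOf_ne_zero_and_mem continuousOn_re_mobiusCurve (C := 4) (fun ζ hζ => ?_) hK
  have hs := norm_pos_iff.mpr hζ
  have hbound := norm_sq_add_inv_le_norm_re_mobiusCurve ζ
  refine ⟨(le_sq_add_inv_sq hs).trans hbound, (le_sq_add_inv_sq (inv_pos.mpr hs)).trans ?_⟩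
  rwa [inv_pow, inv_inv, add_comm]
end

section
/- Define X : ℂ ∖ {0} → ℝ⁴ by X(ζ) = Re( i(ζ + 1/ζ), ζ − 1/ζ, (i/2)(ζ² − 1/ζ²), (1/2)(ζ² + 1/ζ²) ). Then for all ζ₁, ζ₂ ∈ ℂ ∖ {0}, one has X(ζ₁) = X(ζ₂) if and only if ζ₂ = ζ₁ or ζ₂ = −1/conj(ζ₁), where conj denotes complex conjugation. (Hence X descends to an injective map of the Möbius strip (ℂ∖{0})/𝕴, where 𝕴(ζ) = −1/conj(ζ) is a fixed-point-free antiholomorphic involution.) -/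
/-!
Write `𝕴 ζ = -(conj ζ)⁻¹`. Up to signs and a factor `1/2`, the coordinates of `X ζ` are the
real and imaginary parts of the power sums `ζ + 𝕴 ζ` and `ζ² + (𝕴 ζ)²` of the pair `{ζ, 𝕴 ζ}`.
Away from characteristic 2 the first two power sums determine an unordered pair, and since `𝕴`
is an involution, `{ζ₁, 𝕴 ζ₁} = {ζ₂, 𝕴 ζ₂}` exactly when `ζ₂ = ζ₁` or `ζ₂ = 𝕴 ζ₁`.
-/

open ComplexConjugate

theorem add_eq_add_and_sq_add_sq_eq_iff {R : Type*} [CommRing R] [NoZeroDivisors R]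
    [NeZero (2 : R)] {a b c d : R} :
    a + b = c + d ∧ a ^ 2 + b ^ 2 = c ^ 2 + d ^ 2 ↔ c = a ∧ d = b ∨ c = b ∧ d = a := by
  constructor
  · rintro ⟨hs, hp⟩
    have hd : d = a + b - c := by linear_combination -hs
    have h : 2 * ((c - a) * (c - b)) = 0 := by
      subst hd; linear_combination -hp
    rcases mul_eq_zero.mp ((mul_eq_zero.mp h).resolve_left two_ne_zero) with hca | hcb
    · rw [sub_eq_zero] at hca
      exact .inl ⟨hca, by rw [hd, hca]; ring⟩
    · rw [sub_eq_zero] at hcb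
      exact .inr ⟨hcb, by rw [hd, hcb]; ring⟩
  · rintro (⟨rfl, rfl⟩ | ⟨rfl, rfl⟩)
    · exact ⟨rfl, rfl⟩
    · exact ⟨add_comm _ _, add_comm _ _⟩

noncomputable def mobiusInvolution (ζ : ℂ) : ℂ := -(conj ζ)⁻¹

theorem mobiusInvolution_involutive : Function.Involutive mobiusInvolution := by
  intro ζ
  simp [mobiusInvolution]

theorem re_mobiusInvolution (ζ : ℂ) : (mobiusInvolution ζ).re = -ζ⁻¹.re := by
  simp [mobiusInvolution, ← map_inv₀]

theorem im_mobiusInvolution (ζ : ℂ) : (mobiusInvolution ζ).im = ζ⁻¹.im := by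
  simp [mobiusInvolution, ← map_inv₀]

theorem mobiusInvolution_sq (ζ : ℂ) : mobiusInvolution ζ ^ 2 = conj (ζ ^ 2)⁻¹ := by
  rw [mobiusInvolution, neg_sq, ← map_inv₀, ← map_pow, inv_pow]

theorem re_mobiusInvolution_sq (ζ : ℂ) : (mobiusInvolution ζ ^ 2).re = (ζ ^ 2)⁻¹.re := by
  rw [mobiusInvolution_sq, Complex.conj_re]

theorem im_mobiusInvolution_sq (ζ : ℂ) : (mobiusInvolution ζ ^ 2).im = -(ζ ^ 2)⁻¹.im := by
  rw [mobiusInvolution_sq, Complex.conj_im]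

noncomputable def mobiusEmbedding (ζ : ℂ) : Fin 4 → ℝ :=
  fun j => (![Complex.I * (ζ + ζ⁻¹), ζ - ζ⁻¹,
    (Complex.I / 2) * (ζ ^ 2 - (ζ ^ 2)⁻¹), (1 / 2) * (ζ ^ 2 + (ζ ^ 2)⁻¹)] j).re

theorem mobiusEmbedding_eq (ζ : ℂ) :
    mobiusEmbedding ζ =
      ![-(ζ + mobiusInvolution ζ).im, (ζ + mobiusInvolution ζ).re,
        -(ζ ^ 2 + mobiusInvolution ζ ^ 2).im / 2, (ζ ^ 2 + mobiusInvolution ζ ^ 2).re / 2] := by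
  funext j
  fin_cases j <;>
    simp only [mobiusEmbedding, Fin.zero_eta, Fin.mk_one, Fin.reduceFinMk, Matrix.cons_val,
      Complex.mul_re, Complex.add_re, Complex.sub_re, Complex.add_im, Complex.sub_im,
      Complex.I_re, Complex.I_im, Complex.div_ofNat_re, Complex.div_ofNat_im, one_div,
      Complex.inv_re, Complex.inv_im, Complex.re_ofNat, Complex.im_ofNat, Complex.normSq_ofNat,
      re_mobiusInvolution, im_mobiusInvolution, re_mobiusInvolution_sq, im_mobiusInvolution_sq] <;>
    ring

theorem mobiusEmbedding_eq_iff (ζ₁ ζ₂ : ℂ) :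
    mobiusEmbedding ζ₁ = mobiusEmbedding ζ₂ ↔
      ζ₁ + mobiusInvolution ζ₁ = ζ₂ + mobiusInvolution ζ₂ ∧
        ζ₁ ^ 2 + mobiusInvolution ζ₁ ^ 2 = ζ₂ ^ 2 + mobiusInvolution ζ₂ ^ 2 := by
  simp only [mobiusEmbedding_eq, Matrix.vecCons_inj, Complex.ext_iff]
  constructor
  · rintro ⟨h0, h1, h2, h3, -⟩
    exact ⟨⟨h1, by linarith⟩, ⟨by linarith, by linarith⟩⟩
  · rintro ⟨⟨h0, h1⟩, ⟨h2, h3⟩⟩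
    exact ⟨by rw [h1], h0, by rw [h3], by rw [h2], trivial⟩

theorem mobiusEmbedding_eq_iff_eq_or_eq_mobiusInvolution (ζ₁ ζ₂ : ℂ) :
    mobiusEmbedding ζ₁ = mobiusEmbedding ζ₂ ↔ ζ₂ = ζ₁ ∨ ζ₂ = mobiusInvolution ζ₁ := by
  rw [mobiusEmbedding_eq_iff, add_eq_add_and_sq_add_sq_eq_iff]
  constructor
  · exact Or.imp And.left And.left
  · rintro (rfl | rfl)
    · exact .inl ⟨rfl, rfl⟩
    · exact .inr ⟨rfl, mobiusInvolution_involutive ζ₁⟩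

theorem Mobius_strip_identification_general
    (X : ℂ → Fin 4 → ℝ)
    (hX : ∀ ζ : ℂ, ∀ j : Fin 4, X ζ j
      = (![Complex.I * (ζ + ζ⁻¹), ζ - ζ⁻¹,
          (Complex.I / 2) * (ζ ^ 2 - (ζ ^ 2)⁻¹), (1 / 2) * (ζ ^ 2 + (ζ ^ 2)⁻¹)] j).re)
    (ζ₁ ζ₂ : ℂ) :
    X ζ₁ = X ζ₂ ↔ (ζ₂ = ζ₁ ∨ ζ₂ = -((starRingEnd ℂ) ζ₁)⁻¹) := by
  obtain rfl : X = mobiusEmbedding := funext fun ζ => funext (hX ζ)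
  exact mobiusEmbedding_eq_iff_eq_or_eq_mobiusInvolution ζ₁ ζ₂

/-- For `X = Re ∘ Z` with `Z(ζ) = (i(ζ + 1/ζ), ζ − 1/ζ, (i/2)(ζ² − 1/ζ²), (1/2)(ζ² + 1/ζ²))`
on `ℂ ∖ {0}`, one has `X(ζ₁) = X(ζ₂)` iff `ζ₂ = ζ₁` or `ζ₂ = −1/conj(ζ₁)`. Hence `X`
descends to an injective map of the Möbius strip `(ℂ∖{0})/𝕴`, `𝕴(ζ) = −1/conj(ζ)`. -/
theorem Mobius_strip_identification
    (X : ℂ → Fin 4 → ℝ)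
    (hX : ∀ ζ : ℂ, ∀ j : Fin 4, X ζ j
      = (![Complex.I * (ζ + ζ⁻¹), ζ - ζ⁻¹,
          (Complex.I / 2) * (ζ ^ 2 - (ζ ^ 2)⁻¹), (1 / 2) * (ζ ^ 2 + (ζ ^ 2)⁻¹)] j).re)
    (ζ₁ ζ₂ : ℂ) (h1 : ζ₁ ≠ 0) (h2 : ζ₂ ≠ 0) :
    X ζ₁ = X ζ₂ ↔ (ζ₂ = ζ₁ ∨ ζ₂ = -((starRingEnd ℂ) ζ₁)⁻¹) :=
  Mobius_strip_identification_general X hX ζ₁ ζ₂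
end

section
/- Let n ≥ 2 and let A be a symmetric real n×n matrix. Then ⟨Au, u⟩ + ⟨Av, v⟩ > 0 for every pair of vectors u, v ∈ ℝⁿ with |u| = |v| = 1 and u · v = 0 if and only if for every nonzero null vector w ∈ 𝔄* ⊆ ℂⁿ the Hermitian value ∑_{j,k=1}^n A_{jk} wⱼ conj(w_k), which is a real number since A is real symmetric, is positive. (Thus the Hessian of a C² function has positive trace on every 2-plane — the function is strongly minimal plurisubharmonic — exactly when the Levi form of its extension to the tube, which is constant in the imaginary directions, is positive on all null vectors, i.e. the extension is strongly null plurisubharmonic.) -/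
/-!
Writing a complex vector as `w = x + i y` with `x, y ∈ ℝⁿ`, the vector `w` is null exactly when
`x ⊥ y` and `‖x‖ = ‖y‖`, and for real symmetric `A` the Hermitian value of `A` at `w` is
`⟨A x, x⟩ + ⟨A y, y⟩`. Nonzero null vectors are therefore, up to a positive scalar, the same as
orthonormal pairs `(u, v)`, and that scalar only rescales the form by a positive factor.
-/

open scoped InnerProductSpace ComplexConjugate

section OrthonormalPairs

variable {E : Type*} [NormedAddCommGroup E] [InnerProductSpace ℝ E]

theorem inner_map_smul_smul_self (T : E →ₗ[ℝ] E) (c : ℝ) (x : E) :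
    ⟪T (c • x), c • x⟫_ℝ = c ^ 2 * ⟪T x, x⟫_ℝ := by
  rw [T.map_smul, real_inner_smul_left, real_inner_smul_right]
  ring

theorem forall_orthonormal_pair_pos_iff (T : E →ₗ[ℝ] E) :
    (∀ u v : E, ‖u‖ = 1 → ‖v‖ = 1 → ⟪u, v⟫_ℝ = 0 → 0 < ⟪T u, u⟫_ℝ + ⟪T v, v⟫_ℝ) ↔
      ∀ x y : E, x ≠ 0 → ‖x‖ = ‖y‖ → ⟪x, y⟫_ℝ = 0 → 0 < ⟪T x, x⟫_ℝ + ⟪T y, y⟫_ℝ := by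
  constructor
  · intro H x y hx hxy horth
    have hx' : 0 < ‖x‖ := norm_pos_iff.mpr hx
    have hunit : ∀ z : E, ‖z‖ = ‖x‖ → ‖‖x‖⁻¹ • z‖ = 1 := fun z hz => by
      rw [norm_smul, norm_inv, norm_norm, hz, inv_mul_cancel₀ hx'.ne']
    have h := H (‖x‖⁻¹ • x) (‖x‖⁻¹ • y) (hunit x rfl) (hunit y hxy.symm)
      (by rw [real_inner_smul_left, real_inner_smul_right, horth, mul_zero, mul_zero])
    rw [inner_map_smul_smul_self, inner_map_smul_smul_self, ← mul_add] at h
    exact pos_of_mul_pos_right h (by positivity)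
  · intro H u v hu hv horth
    exact H u v (norm_ne_zero_iff.mp (hu ▸ one_ne_zero)) (hu.trans hv.symm) horth

end OrthonormalPairs

section ComplexVectors

variable {ι : Type*}

theorem forall_pi_complex_iff_forall_re_im (P : (ι → ℂ) → Prop) :
    (∀ w, P w) ↔ ∀ x y : EuclideanSpace ℝ ι, P fun j => ⟨x j, y j⟩ :=
  ⟨fun H _ _ => H _, fun H w => H (WithLp.toLp 2 fun j => (w j).re)
    (WithLp.toLp 2 fun j => (w j).im)⟩

theorem pi_complex_mk_ne_zero_iff (x y : EuclideanSpace ℝ ι) :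
    (fun j => (⟨x j, y j⟩ : ℂ)) ≠ 0 ↔ x ≠ 0 ∨ y ≠ 0 := by
  rw [← not_and_or, not_congr]
  simp [funext_iff, Complex.ext_iff, forall_and, PiLp.ext_iff]

variable [Fintype ι]

theorem sum_complex_mk_sq_eq_zero_iff (x y : EuclideanSpace ℝ ι) :
    ∑ j, (⟨x j, y j⟩ : ℂ) ^ 2 = 0 ↔ ‖x‖ = ‖y‖ ∧ ⟪x, y⟫_ℝ = 0 := by
  have hre : (∑ j, (⟨x j, y j⟩ : ℂ) ^ 2).re = ‖x‖ ^ 2 - ‖y‖ ^ 2 := by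
    rw [EuclideanSpace.real_norm_sq_eq, EuclideanSpace.real_norm_sq_eq]
    simp only [sq, Complex.re_sum, Complex.mul_re, Finset.sum_sub_distrib]
  have him : (∑ j, (⟨x j, y j⟩ : ℂ) ^ 2).im = 2 * ⟪x, y⟫_ℝ := by
    simp only [sq, Complex.im_sum, Complex.mul_im, PiLp.inner_apply, RCLike.inner_apply,
      Real.ringHom_apply, Finset.mul_sum]
    exact Finset.sum_congr rfl fun j _ => by ring
  rw [Complex.ext_iff, hre, him, ← sq_eq_sq₀ (norm_nonneg x) (norm_nonneg y)]
  simp [sub_eq_zero]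

variable [DecidableEq ι]

theorem inner_toEuclideanLin_self (A : Matrix ι ι ℝ) (x : EuclideanSpace ℝ ι) :
    ⟪Matrix.toEuclideanLin A x, x⟫_ℝ = ∑ j, ∑ k, A j k * x j * x k := by
  simp only [Matrix.toLpLin_apply, PiLp.inner_apply, Matrix.mulVec, dotProduct,
    RCLike.inner_apply, map_sum, Real.ringHom_apply, Finset.mul_sum]
  exact Finset.sum_congr rfl fun j _ => Finset.sum_congr rfl fun k _ => by ring

theorem sum_mul_complex_mk_mul_conj_eq {A : Matrix ι ι ℝ} (hA : A.IsSymm)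
    (x y : EuclideanSpace ℝ ι) :
    ∑ j, ∑ k, (A j k : ℂ) * ⟨x j, y j⟩ * conj ⟨x k, y k⟩ =
      ((⟪Matrix.toEuclideanLin A x, x⟫_ℝ + ⟪Matrix.toEuclideanLin A y, y⟫_ℝ : ℝ) : ℂ) := by
  have hsymm : ∑ j, ∑ k, A j k * y j * x k = ∑ j, ∑ k, A j k * x j * y k := by
    rw [Finset.sum_comm]
    exact Finset.sum_congr rfl fun j _ => Finset.sum_congr rfl fun k _ => by rw [hA.apply]; ring
  apply Complex.ext
  · simp [Complex.re_sum, inner_toEuclideanLin_self, Finset.sum_add_distrib]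
  · simp [Complex.im_sum, Finset.sum_add_distrib, hsymm]

end ComplexVectors

theorem strongly_minimal_psh_iff_null_psh_general
    (n : ℕ) (A : Matrix (Fin n) (Fin n) ℝ) (hA : A.IsSymm) :
    (∀ u v : EuclideanSpace ℝ (Fin n), ‖u‖ = 1 → ‖v‖ = 1 → inner ℝ u v = (0:ℝ) →
        0 < (inner ℝ (Matrix.toEuclideanLin A u) u : ℝ)
            + (inner ℝ (Matrix.toEuclideanLin A v) v : ℝ))
      ↔ (∀ w : Fin n → ℂ, w ≠ 0 → (∑ j : Fin n, (w j) ^ 2) = 0 →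
          ∃ r : ℝ, 0 < r ∧
            (∑ j : Fin n, ∑ k : Fin n, (A j k : ℂ) * w j * (starRingEnd ℂ) (w k)) = r) := by
  rw [forall_orthonormal_pair_pos_iff, forall_pi_complex_iff_forall_re_im]
  refine forall₂_congr fun x y => ?_
  simp only [pi_complex_mk_ne_zero_iff, sum_complex_mk_sq_eq_zero_iff,
    sum_mul_complex_mk_mul_conj_eq hA, Complex.ofReal_inj, exists_eq_right']
  constructor
  · rintro H (hx | hy) ⟨hnorm, horth⟩
    · exact H hx hnorm horth
    · exact H (by rwa [← norm_ne_zero_iff, hnorm, norm_ne_zero_iff]) hnorm horth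
  · rintro H hx hnorm horth
    exact H (Or.inl hx) ⟨hnorm, horth⟩

/-- A symmetric real `n×n` matrix `A` satisfies `⟨Au,u⟩ + ⟨Av,v⟩ > 0` for all orthonormal
pairs `u, v ∈ ℝⁿ` (positive trace on every 2-plane) if and only if for every nonzero null
vector `w ∈ 𝔄* ⊆ ℂⁿ` the Hermitian value `∑_{j,k} A_{jk} wⱼ conj(w_k)` is a positive real
number. -/
theorem strongly_minimal_psh_iff_null_psh
    (n : ℕ) (hn : 2 ≤ n) (A : Matrix (Fin n) (Fin n) ℝ) (hA : A.IsSymm) :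
    (∀ u v : EuclideanSpace ℝ (Fin n), ‖u‖ = 1 → ‖v‖ = 1 → inner ℝ u v = (0:ℝ) →
        0 < (inner ℝ (Matrix.toEuclideanLin A u) u : ℝ)
            + (inner ℝ (Matrix.toEuclideanLin A v) v : ℝ))
      ↔ (∀ w : Fin n → ℂ, w ≠ 0 → (∑ j : Fin n, (w j) ^ 2) = 0 →
          ∃ r : ℝ, 0 < r ∧
            (∑ j : Fin n, ∑ k : Fin n, (A j k : ℂ) * w j * (starRingEnd ℂ) (w k)) = r) :=
  strongly_minimal_psh_iff_null_psh_general n A hA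
end
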